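/- arXiv:1002.2597 — 3 statements merged into one kernel-verified Lean document; each statement's English description precedes it below -/
import Mathlib

section
/- Let p be an odd prime, τ an integer not divisible by p, and k ≥ 2. If the multiplicative order of τ modulo p^{k+1} equals the multiplicative order of τ modulo p^k, then the multiplicative order of τ modulo p^k equals the multiplicative order of τ modulo p^{k−1}. -/
/-!
If the orders of `τ` modulo `p^j` and `p^(j+1)` differ (with `j ≥ 1`, order `d` modulo `p^j`),
then `p` divides `τ^d - 1` exactly `j` times. Lifting the exponent for the odd prime `p` shows that
`p` divides `τ^(d p) - 1` exactly `j + 1` times, so the order modulo `p^(j+1)` divides `d p` while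
the order modulo `p^(j+2)` does not: the orders keep growing once they have started to.
-/

namespace ZMod

theorem orderOf_intCast_dvd_iff (n : ℕ) (τ : ℤ) (e : ℕ) :
    orderOf (τ : ZMod n) ∣ e ↔ (n : ℤ) ∣ τ ^ e - 1 := by
  rw [orderOf_dvd_iff_pow_eq_one, ← Int.cast_pow, ← Int.cast_one, intCast_eq_intCast_iff_dvd_sub,
    dvd_sub_comm]

theorem orderOf_intCast_dvd_orderOf_intCast {m n : ℕ} (hmn : m ∣ n) (τ : ℤ) :
    orderOf (τ : ZMod m) ∣ orderOf (τ : ZMod n) :=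
  (orderOf_intCast_dvd_iff m τ _).2 <|
    (Int.natCast_dvd_natCast.2 hmn).trans ((orderOf_intCast_dvd_iff n τ _).1 dvd_rfl)

end ZMod

theorem Int.emultiplicity_pow_prime_sub_one {p : ℕ} (hp : p.Prime) (hodd : p ≠ 2) {x : ℤ}
    (hx : (p : ℤ) ∣ x - 1) :
    emultiplicity (p : ℤ) (x ^ p - 1) = emultiplicity (p : ℤ) (x - 1) + 1 := by
  have hpx : ¬ (p : ℤ) ∣ x := fun hpx =>
    (Nat.prime_iff_prime_int.1 hp).not_dvd_one (by simpa using dvd_sub hpx hx)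
  simpa [hp.emultiplicity_self] using
    Int.emultiplicity_pow_sub_pow hp (hp.odd_of_ne_two hodd) (y := 1) (by simpa using hx) hpx p

open ZMod in
theorem orderOf_intCast_prime_pow_succ_ne {p : ℕ} (hp : p.Prime) (hodd : p ≠ 2) (τ : ℤ) {j : ℕ}
    (hj : 1 ≤ j) (hne : orderOf (τ : ZMod (p ^ (j + 1))) ≠ orderOf (τ : ZMod (p ^ j))) :
    orderOf (τ : ZMod (p ^ (j + 2))) ≠ orderOf (τ : ZMod (p ^ (j + 1))) := by
  set d := orderOf (τ : ZMod (p ^ j))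
  have hd : (p : ℤ) ^ j ∣ τ ^ d - 1 := by exact_mod_cast (orderOf_intCast_dvd_iff _ τ d).1 dvd_rfl
  have hnd : ¬ (p : ℤ) ^ (j + 1) ∣ τ ^ d - 1 := fun h =>
    hne <| Nat.dvd_antisymm ((orderOf_intCast_dvd_iff _ τ d).2 (by exact_mod_cast h))
      (orderOf_intCast_dvd_orderOf_intCast (pow_dvd_pow p j.le_succ) τ)
  have hmult : emultiplicity (p : ℤ) (τ ^ (d * p) - 1) = (j + 1 : ℕ) := by
    rw [pow_mul, Int.emultiplicity_pow_prime_sub_one hp hodd ((dvd_pow_self _ (by omega)).trans hd),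
      emultiplicity_eq_of_dvd_of_not_dvd hd hnd]
    norm_cast
  intro heq
  have hsucc : orderOf (τ : ZMod (p ^ (j + 1))) ∣ d * p := by
    rw [orderOf_intCast_dvd_iff]
    exact_mod_cast pow_dvd_of_le_emultiplicity hmult.ge
  rw [← heq, orderOf_intCast_dvd_iff] at hsucc
  have hlt : emultiplicity (p : ℤ) (τ ^ (d * p) - 1) < (j + 2 : ℕ) := by
    rw [hmult]
    norm_cast
    omega
  exact not_pow_dvd_of_emultiplicity_lt hlt (by exact_mod_cast hsucc)

theorem multiplicative_order_stabilizes_general (p : ℕ) (hp : p.Prime) (hodd : p ≠ 2)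
    (τ : ℤ) (k : ℕ) (hk : 2 ≤ k)
    (h : orderOf (τ : ZMod (p ^ (k + 1))) = orderOf (τ : ZMod (p ^ k))) :
    orderOf (τ : ZMod (p ^ k)) = orderOf (τ : ZMod (p ^ (k - 1))) := by
  obtain ⟨j, rfl⟩ : ∃ j, k = j + 1 := ⟨k - 1, by omega⟩
  by_contra hne
  exact orderOf_intCast_prime_pow_succ_ne hp hodd τ (by omega) hne h

/-- Key lemma (Lercier's Corollary 4): for an odd prime `p` and `τ` coprime to `p`,
if the multiplicative order of `τ` modulo `p^(k+1)` equals that modulo `p^k` (for `k ≥ 2`),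
then the order modulo `p^k` equals the order modulo `p^(k-1)`. -/
theorem multiplicative_order_stabilizes (p : ℕ) (hp : p.Prime) (hodd : p ≠ 2)
    (τ : ℤ) (hτ : ¬ (p : ℤ) ∣ τ) (k : ℕ) (hk : 2 ≤ k)
    (h : orderOf (τ : ZMod (p ^ (k + 1))) = orderOf (τ : ZMod (p ^ k))) :
    orderOf (τ : ZMod (p ^ k)) = orderOf (τ : ZMod (p ^ (k - 1))) :=
  multiplicative_order_stabilizes_general p hp hodd τ k hk h
end

section
/- Let p be an odd prime, K a field of characteristic p, f(X) = X³ + a₂X² + a₄X + a₆ ∈ K[X], and let H be the coefficient of X^{p−1} in f(X)^{(p−1)/2}. Suppose c ∈ K is a nonzero element with c^{p−1} = H, and set u = c^{−2} and f_u(X) = X³ + a₂uX² + a₄u²X + a₆u³. Then the coefficient of X^{p−1} in f_u(X)^{(p−1)/2} equals 1; that is, the twisted curve y² = f_u(x) has Hasse invariant 1. -/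
/-!
The twist `X³ + a₂uX² + a₄u²X + a₆u³ = u³ f(X/u)` is `f.scaleRoots u`, and for monic `f` scaling
the roots commutes with taking powers. Hence the coefficient of `X^(2m)` in the `m`-th power of
the twist is `u^(3m - 2m) = u^m` times that of `f^m`. With `p - 1 = 2m` this factor is
`c^(-(p-1)) = H⁻¹`.
-/

open Polynomial

namespace Polynomial

variable {R : Type*} [CommRing R]

theorem scaleRoots_cubic [Nontrivial R] (a b d u : R) :
    (X ^ 3 + C a * X ^ 2 + C b * X + C d).scaleRoots u =
      X ^ 3 + C (a * u) * X ^ 2 + C (b * u ^ 2) * X + C (d * u ^ 3) := by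
  have hdeg : (X ^ 3 + C a * X ^ 2 + C b * X + C d).natDegree = 3 := by compute_degree!
  ext (_ | _ | _ | _ | i) <;>
    simp only [coeff_scaleRoots, hdeg, coeff_add, coeff_C_mul, coeff_X_pow, coeff_X, coeff_C] <;>
    simp

theorem coeff_scaleRoots_pow_of_monic {p : R[X]} (hp : p.Monic) (u : R) (n k : ℕ) :
    ((p.scaleRoots u) ^ n).coeff k = (p ^ n).coeff k * u ^ (n * p.natDegree - k) := by
  nontriviality R
  rw [← pow_scaleRoots' _ _ _ (by simp [hp.leadingCoeff]), coeff_scaleRoots, hp.natDegree_pow]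

theorem coeff_pow_cubic_twist (a b d u : R) (m : ℕ) :
    ((X ^ 3 + C (a * u) * X ^ 2 + C (b * u ^ 2) * X + C (d * u ^ 3)) ^ m).coeff (2 * m) =
      ((X ^ 3 + C a * X ^ 2 + C b * X + C d) ^ m).coeff (2 * m) * u ^ m := by
  nontriviality R
  have hmonic : (X ^ 3 + C a * X ^ 2 + C b * X + C d).Monic := by monicity!
  have hdeg : (X ^ 3 + C a * X ^ 2 + C b * X + C d).natDegree = 3 := by compute_degree!
  rw [← scaleRoots_cubic, coeff_scaleRoots_pow_of_monic hmonic, hdeg]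
  congr 2
  omega

end Polynomial

theorem hasseInvariant_twist_eq_one_general (p : ℕ) (hp : p.Prime) (hodd : p ≠ 2)
    (K : Type*) [Field K] (a₂ a₄ a₆ : K) (H : K)
    (hH : H = ((X ^ 3 + C a₂ * X ^ 2 + C a₄ * X + C a₆) ^ ((p - 1) / 2)).coeff (p - 1))
    (c : K) (hc : c ≠ 0) (hcH : c ^ (p - 1) = H) (u : K) (hu : u = c⁻¹ ^ 2) :
    ((X ^ 3 + C (a₂ * u) * X ^ 2 + C (a₄ * u ^ 2) * X + C (a₆ * u ^ 3)) ^ ((p - 1) / 2)).coeff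
        (p - 1) = 1 := by
  have hp_odd : p % 2 = 1 := Nat.odd_iff.mp (hp.odd_of_ne_two hodd)
  generalize hm : (p - 1) / 2 = m at hH ⊢
  replace hm : p - 1 = 2 * m := by omega
  rw [hm] at hH hcH ⊢
  have hu_pow : u ^ m = H⁻¹ := by rw [hu, ← pow_mul, inv_pow, hcH]
  rw [coeff_pow_cubic_twist, ← hH, hu_pow]
  exact mul_inv_cancel₀ (hcH ▸ pow_ne_zero _ hc)

/-- Let `p` be an odd prime, `K` a field of characteristic `p`, `f = X³ + a₂X² + a₄X + a₆` with
Hasse invariant `H` (the coefficient of `X^(p-1)` in `f^((p-1)/2)`). If `c ∈ K` is nonzero with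
`c^(p-1) = H`, and `u = c⁻²`, then the twisted cubic `f_u = X³ + a₂uX² + a₄u²X + a₆u³` has Hasse
invariant `1`. -/
theorem hasseInvariant_twist_eq_one (p : ℕ) (hp : p.Prime) (hodd : p ≠ 2)
    (K : Type*) [Field K] [CharP K p] (a₂ a₄ a₆ : K) (H : K)
    (hH : H = ((X ^ 3 + C a₂ * X ^ 2 + C a₄ * X + C a₆) ^ ((p - 1) / 2)).coeff (p - 1))
    (c : K) (hc : c ≠ 0) (hcH : c ^ (p - 1) = H) (u : K) (hu : u = c⁻¹ ^ 2) :
    ((X ^ 3 + C (a₂ * u) * X ^ 2 + C (a₄ * u ^ 2) * X + C (a₆ * u ^ 3)) ^ ((p - 1) / 2)).coeff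
        (p - 1) = 1 :=
  hasseInvariant_twist_eq_one_general p hp hodd K a₂ a₄ a₆ H hH c hc hcH u hu
end

section
/- Let K be a field of characteristic different from 2, let g, h ∈ K[X], and let x, y, X, Y, Z, s ∈ K satisfy y ≠ 0, s ≠ 0, Z ≠ 0, h(x) ≠ 0, and Z = −2y·h'(x)/h(x). Then the following two conditions are equivalent: (i) X = g(x)/h(x)² and Y = s·y·(g'(x)h(x) − 2g(x)h'(x))/h(x)³ (i.e. Y = s·y·(g/h²)'(x)); (ii) X·h(x)² − g(x) = 0 and the derivative of the polynomial X·h(T)² − g(T) − (Y/(sZ))·h(T)² (with X, Y, Z, s regarded as constants) vanishes at T = x. -/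
open Polynomial

/-!
Write `a = h(x)`, `b = h'(x)` and `c = Y/(sZ)`. The derivative in (ii) evaluates to
`2(X - c)ab - g'(x)`, so once the first equations of (i) and (ii) (which agree since `a ≠ 0`)
fix `X = g(x)/a²`, the second equation of (ii) reads `c = g(x)/a² - g'(x)/(2ab)`. Multiplying by
`sZ = -2syb/a` turns this into `Y = sy(g'(x)a - 2g(x)b)/a³`. Note that `Z ≠ 0` forces `2`, `y`
and `b` to be nonzero.
-/

theorem eval_derivative_C_mul_sq_sub_sub_C_mul_sq {R : Type*} [CommRing R] (X c x : R)
    (g h : R[X]) :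
    (derivative (C X * h ^ 2 - g - C c * h ^ 2)).eval x =
      2 * (X - c) * h.eval x * (derivative h).eval x - (derivative g).eval x := by
  simp only [derivative_sub, derivative_mul, derivative_pow, derivative_C, eval_sub, eval_mul,
    eval_pow, eval_C, zero_mul, zero_add]
  ring

theorem eq_div_cube_iff_derivative_condition {K : Type*} [Field K] {a b G G' y s Y : K}
    (ha : a ≠ 0) (hs : s ≠ 0) (h2 : (2 : K) ≠ 0) (hy : y ≠ 0) (hb : b ≠ 0) :
    Y = s * y * (G' * a - 2 * G * b) / a ^ 3 ↔
      2 * (G / a ^ 2 - Y / (s * (-2 * y * b / a))) * a * b - G' = 0 := by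
  field_simp
  constructor <;> intro hY <;> linear_combination hY

theorem voloch_system_iff_gcd_system_general (K : Type*) [Field K]
    (g h : K[X]) (x y XX YY ZZ s : K)
    (hs : s ≠ 0) (hZ : ZZ ≠ 0) (hhx : h.eval x ≠ 0)
    (hZdef : ZZ = -2 * y * (derivative h).eval x / h.eval x) :
    (XX = g.eval x / (h.eval x) ^ 2 ∧
        YY = s * y * ((derivative g).eval x * h.eval x -
          2 * g.eval x * (derivative h).eval x) / (h.eval x) ^ 3) ↔
      (XX * (h.eval x) ^ 2 - g.eval x = 0 ∧
        (derivative (C XX * h ^ 2 - g - C (YY / (s * ZZ)) * h ^ 2)).eval x = 0) := by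
  subst hZdef
  obtain ⟨h2, hy, hb, -⟩ : (2 : K) ≠ 0 ∧ y ≠ 0 ∧ (derivative h).eval x ≠ 0 ∧ h.eval x ≠ 0 := by
    simpa [not_or, and_assoc] using hZ
  rw [eval_derivative_C_mul_sq_sub_sub_C_mul_sq, sub_eq_zero, ← eq_div_iff (pow_ne_zero 2 hhx)]
  refine and_congr_right fun hX => ?_
  rw [hX]
  exact eq_div_cube_iff_derivative_condition hhx hs h2 hy hb

/-- The algebraic identity underlying the resolution of Voloch's system by a single GCD
computation. Over a field `K` of characteristic `≠ 2`, with `g, h ∈ K[X]` and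
`x, y, XX, YY, ZZ, s ∈ K` satisfying `y ≠ 0`, `s ≠ 0`, `ZZ ≠ 0`, `h(x) ≠ 0` and
`ZZ = -2y·h'(x)/h(x)`, the conditions
(i)  `XX = g(x)/h(x)²` and `YY = s·y·(g'(x)h(x) - 2g(x)h'(x))/h(x)³`
and
(ii) `XX·h(x)² - g(x) = 0` and `(XX·h(T)² - g(T) - (YY/(s·ZZ))·h(T)²)'` vanishes at `T = x`
are equivalent. -/
theorem voloch_system_iff_gcd_system (K : Type*) [Field K] (hchar : (2 : K) ≠ 0)
    (g h : K[X]) (x y XX YY ZZ s : K)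
    (hy : y ≠ 0) (hs : s ≠ 0) (hZ : ZZ ≠ 0) (hhx : h.eval x ≠ 0)
    (hZdef : ZZ = -2 * y * (derivative h).eval x / h.eval x) :
    (XX = g.eval x / (h.eval x) ^ 2 ∧
        YY = s * y * ((derivative g).eval x * h.eval x -
          2 * g.eval x * (derivative h).eval x) / (h.eval x) ^ 3) ↔
      (XX * (h.eval x) ^ 2 - g.eval x = 0 ∧
        (derivative (C XX * h ^ 2 - g - C (YY / (s * ZZ)) * h ^ 2)).eval x = 0) :=
  voloch_system_iff_gcd_system_general K g h x y XX YY ZZ s hs hZ hhx hZdef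
end
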